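/- For every feasible fractional solution x there exists a family of nonnegative reals λ_{I,j}, indexed by monochromatic sequence matchings M_{I,j}, satisfying: (a) for each input item i, Σ{λ_{I,j} : M_{I,j} is an MSM with i ∈ I} = 1; (b) for each time slot t with k+1 ≤ t ≤ k+n, Σ{λ_{I,j} : M_{I,j} is an MSM with j < t ≤ j + |I|} = 1; and (c) Σ{λ_{I,j} : M_{I,j} is an MSM} = z(x). -/

import Mathlib

open Finset

open scoped Classical in
/-- The next item of the same color as item `i`, or `k+n+2` if `i` is the last of its color. -/
noncomputable def nxt (k n : ℕ) (c : ℕ → ℕ) (i : ℕ) : ℕ :=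
  if h : ∃ i', (i < i' ∧ i' ≤ n) ∧ c i' = c i then Nat.find h else k + n + 2

/-- Feasibility of a fractional solution of the RBM linear program. -/
def Feasible (k n : ℕ) (c : ℕ → ℕ) (x : ℕ → ℕ → ℝ) : Prop :=
  (∀ i j, ¬(1 ≤ i ∧ i ≤ n ∧ max i (k+1) ≤ j ∧ j ≤ k + n) → x i j = 0) ∧
  (∀ i, 1 ≤ i → i ≤ n → ∑ j ∈ Finset.Icc (max i (k+1)) (k+n), x i j = 1) ∧
  (∀ j, k+1 ≤ j → j ≤ k+n → ∑ i ∈ Finset.Icc 1 (min j n), x i j = 1) ∧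
  (∀ i, 1 ≤ i → i ≤ n → nxt k n c i ≤ n →
    ∀ j, nxt k n c i ≤ j → x (nxt k n c i) j - x i (j-1) ≥ 0) ∧
  (∀ i j, 0 ≤ x i j)

/-- The cost `z(x)` of a fractional solution. -/
noncomputable def cost (k n : ℕ) (c : ℕ → ℕ) (x : ℕ → ℕ → ℝ) : ℝ :=
  ∑ i ∈ Finset.Icc 1 n, ∑ j ∈ Finset.Icc (max i (k+1)) (nxt k n c i - 2), x i j

/-- The weight `w_i^j` of item `i` at time `j`. -/
def weight (k : ℕ) (x : ℕ → ℕ → ℝ) (i j : ℕ) : ℝ :=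
  1 - ∑ j' ∈ Finset.Icc (max i (k+1)) j, x i j'

/-- The `s`-th item (0-based) of the chain of same-color items starting at item `i`:
`i, n(i), n(n(i)), …`. -/
noncomputable def chainItem (k n : ℕ) (c : ℕ → ℕ) (i s : ℕ) : ℕ := (nxt k n c)^[s] i

/-- `IsMSM k n c i m j` says that the maximal sequence `I = (i_1,…,i_m)` of consecutive
same-color items starting at `i_1 = i` (so `i_{s+1} = n(i_s)`), matched by
`M_{I,j}(i_s) = j + s`, is a monochromatic sequence matching (MSM): all items are genuine
input items, `j + s ≥ i_s` for all `s`, and `j + m < n(i_m) - 1`. -/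
def IsMSM (k n : ℕ) (c : ℕ → ℕ) (i m j : ℕ) : Prop :=
  1 ≤ i ∧ 1 ≤ m ∧ k ≤ j ∧ j + m ≤ k + n ∧
  (∀ s, s < m → chainItem k n c i s ≤ n) ∧
  (∀ s, s < m → chainItem k n c i s ≤ j + s + 1) ∧
  j + m + 1 < nxt k n c (chainItem k n c i (m - 1))

/-- The (finite) index set of candidate MSM triples `(i, m, j)`:
first item `i`, length `m`, start time `j`. -/
def msmTriples (k n : ℕ) : Finset (ℕ × ℕ × ℕ) :=
  (Finset.Icc 1 n) ×ˢ (Finset.Icc 1 n) ×ˢ (Finset.Icc k (k + n))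

open scoped Classical in
/-- `lam` is an MSM decomposition of `x`: a family of nonnegative reals indexed by MSMs
such that for every item `i` and time `t`,
`x_{i,t} = Σ { λ_{I,j} : M_{I,j} is an MSM with i ∈ I and M_{I,j}(i) = t }`. -/
def IsMSMDecomp (k n : ℕ) (c : ℕ → ℕ) (x : ℕ → ℕ → ℝ) (lam : ℕ × ℕ × ℕ → ℝ) : Prop :=
  (∀ p, 0 ≤ lam p) ∧
  (∀ p, ¬(p ∈ msmTriples k n ∧ IsMSM k n c p.1 p.2.1 p.2.2) → lam p = 0) ∧
  (∀ i t, 1 ≤ i → i ≤ n →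
    x i t = ∑ p ∈ (msmTriples k n).filter
        (fun p => IsMSM k n c p.1 p.2.1 p.2.2 ∧
          ∃ s, s < p.2.1 ∧ chainItem k n c p.1 s = i ∧ p.2.2 + s + 1 = t),
      lam p)

/-- `y_{i,j}`: equals `x_{i,j}` if `n(i) > j + 1`, and `0` otherwise. -/
noncomputable def yval (k n : ℕ) (c : ℕ → ℕ) (x : ℕ → ℕ → ℝ) (i j : ℕ) : ℝ :=
  if j + 1 < nxt k n c i then x i j else 0

/-- `F(t) = Σ_{j=k+1}^{t} Σ_{i ≤ j} y_{i,j}`, the cost accumulated by `x` up to time `t`. -/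
noncomputable def Fval (k n : ℕ) (c : ℕ → ℕ) (x : ℕ → ℕ → ℝ) (t : ℕ) : ℝ :=
  ∑ j ∈ Finset.Icc (k+1) t, ∑ i ∈ Finset.Icc 1 j, yval k n c x i j

/-!
First decompose `x` itself: find `λ ≥ 0` on MSMs with `x_{i,t} = Σ {λ_{I,j} : M_{I,j}(i) = t}`.
If `q` is the predecessor of `i` (`n(q) = i`), the part `x_{i,t} - x_{q,t-1}` of `x_{i,t}`, which
is nonnegative by constraint (3), cannot be inherited from `q`; it is placed on the longest chain
`i, n(i), n(n(i)), …` matched to the slots `t, t + 1, …` while each next item has already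
arrived. Constraint (3) propagates positivity along this chain, so it is an MSM, and by induction
along predecessors the chains through `(i, t)` carry exactly `x_{i,t}`.

Given such a decomposition, (a) and (b) are the constraints (1) and (2) of `x`, and (c) follows by
charging every MSM to its last item `i` and last slot `t`; these pairs are exactly those with
`t ≤ n(i) - 2` summed in `z(x)`.
-/

open scoped Classical

lemma nxt_le_or_eq (k n : ℕ) (c : ℕ → ℕ) (i : ℕ) : nxt k n c i ≤ n ∨ nxt k n c i = k + n + 2 := by
  unfold nxt
  split_ifs with h
  · exact .inl (Nat.find_spec h).1.2
  · exact .inr rfl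

section Chain

variable {k n : ℕ} {c : ℕ → ℕ} {i : ℕ}

lemma lt_nxt_of_le (hi : i ≤ n) : i < nxt k n c i := by
  unfold nxt
  split_ifs with h
  · exact (Nat.find_spec h).1.1
  · omega

lemma lt_nxt_of_nxt_le (h : nxt k n c i ≤ n) : i < nxt k n c i := by
  unfold nxt at *
  split_ifs at * with h'
  · exact (Nat.find_spec h').1.1
  · omega

lemma color_nxt (h : nxt k n c i ≤ n) : c (nxt k n c i) = c i := by
  unfold nxt at *
  split_ifs at * with h'
  · exact (Nat.find_spec h').2
  · omega

lemma nxt_le_of_color_eq {p : ℕ} (hip : i < p) (hp : p ≤ n) (hc : c p = c i) :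
    nxt k n c i ≤ p := by
  have h : ∃ i', (i < i' ∧ i' ≤ n) ∧ c i' = c i := ⟨p, ⟨hip, hp⟩, hc⟩
  rw [nxt, dif_pos h]
  exact Nat.find_min' h ⟨⟨hip, hp⟩, hc⟩

lemma nxt_inj {p q : ℕ} (hp : p ≤ n) (hq : q ≤ n) (hpn : nxt k n c p ≤ n)
    (h : nxt k n c p = nxt k n c q) : p = q := by
  have hqn : nxt k n c q ≤ n := h ▸ hpn
  have hc : c p = c q := by rw [← color_nxt hpn, h, color_nxt hqn]
  rcases lt_trichotomy p q with hpq | rfl | hqp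
  · have := nxt_le_of_color_eq (k := k) hpq hq hc.symm
    have := lt_nxt_of_le (k := k) (c := c) hq
    omega
  · rfl
  · have := nxt_le_of_color_eq (k := k) hqp hp hc
    have := lt_nxt_of_le (k := k) (c := c) hp
    omega

@[simp] lemma chainItem_zero (i : ℕ) : chainItem k n c i 0 = i := rfl

lemma chainItem_succ (i s : ℕ) :
    chainItem k n c i (s + 1) = nxt k n c (chainItem k n c i s) :=
  Function.iterate_succ_apply' _ _ _

lemma chainItem_succ' (i s : ℕ) :
    chainItem k n c i (s + 1) = chainItem k n c (nxt k n c i) s :=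
  Function.iterate_succ_apply _ _ _

lemma chainItem_add (i s u : ℕ) :
    chainItem k n c i (s + u) = chainItem k n c (chainItem k n c i s) u := by
  rw [chainItem, add_comm, Function.iterate_add_apply]
  rfl

lemma add_le_chainItem {s : ℕ} (h : ∀ u < s, chainItem k n c i u ≤ n) :
    i + s ≤ chainItem k n c i s := by
  induction s with
  | zero => simp
  | succ s ih =>
    have := lt_nxt_of_le (k := k) (c := c) (h s (by omega))
    have := ih fun u hu => h u (by omega)
    rw [chainItem_succ]
    omega

lemma chainItem_strictMonoOn {m : ℕ} (h : ∀ s < m, chainItem k n c i s ≤ n) :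
    StrictMonoOn (chainItem k n c i) (Set.Iio m) := by
  intro s _ s' hs' hss'
  obtain ⟨u, rfl⟩ := Nat.exists_eq_add_of_lt hss'
  rw [add_assoc, chainItem_add]
  have := add_le_chainItem (i := chainItem k n c i s) (s := u + 1) fun v hv => by
    rw [← chainItem_add]
    exact h _ (by rw [Set.mem_Iio] at hs'; omega)
  omega

end Chain

/-- `nxt k n c i ≤ n` says `i ≠ last(i)`, and `nxt k n c i ≤ t + 1` is condition (ii) for
item `n(i)` in slot `t + 1`. -/
def Continues (k n : ℕ) (c : ℕ → ℕ) (i t : ℕ) : Prop :=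
  nxt k n c i ≤ n ∧ nxt k n c i ≤ t + 1

noncomputable def chainLen (k n : ℕ) (c : ℕ → ℕ) (i t : ℕ) : ℕ :=
  if h : Continues k n c i t then chainLen k n c (nxt k n c i) (t + 1) + 1 else 1
termination_by n - i
decreasing_by have := h.1; have := lt_nxt_of_nxt_le h.1; omega

lemma one_le_chainLen (k n : ℕ) (c : ℕ → ℕ) (i t : ℕ) : 1 ≤ chainLen k n c i t := by
  rw [chainLen.eq_1]
  split_ifs <;> omega

section ChainLen

variable {k n : ℕ} {c : ℕ → ℕ} {i t s : ℕ}

lemma chainLen_of_continues (h : Continues k n c i t) :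
    chainLen k n c i t = chainLen k n c (nxt k n c i) (t + 1) + 1 := by
  rw [chainLen.eq_1, dif_pos h]

lemma chainLen_of_not_continues (h : ¬Continues k n c i t) : chainLen k n c i t = 1 := by
  rw [chainLen.eq_1, dif_neg h]

lemma chainLen_eq_add (hs : s < chainLen k n c i t) :
    chainLen k n c i t = s + chainLen k n c (chainItem k n c i s) (t + s) := by
  induction s generalizing i t with
  | zero => simp
  | succ s ih =>
    have h : Continues k n c i t := by
      by_contra h
      rw [chainLen_of_not_continues h] at hs
      omega
    rw [chainLen_of_continues h] at hs ⊢
    rw [ih (by omega), chainItem_succ', show t + 1 + s = t + (s + 1) by omega]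
    omega

lemma succ_lt_chainLen_iff (hs : s < chainLen k n c i t) :
    s + 1 < chainLen k n c i t ↔ Continues k n c (chainItem k n c i s) (t + s) := by
  rw [chainLen_eq_add hs]
  by_cases h : Continues k n c (chainItem k n c i s) (t + s)
  · have := one_le_chainLen k n c (nxt k n c (chainItem k n c i s)) (t + s + 1)
    rw [chainLen_of_continues h]
    simp only [h, iff_true]
    omega
  · rw [chainLen_of_not_continues h]
    simp only [h, lt_irrefl]

lemma continues_chainItem (hs : s + 1 < chainLen k n c i t) :
    Continues k n c (chainItem k n c i s) (t + s) :=
  (succ_lt_chainLen_iff (by omega)).1 hs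

lemma not_continues_chainItem_chainLen :
    ¬Continues k n c (chainItem k n c i (chainLen k n c i t - 1)) (t + (chainLen k n c i t - 1)) := by
  have := one_le_chainLen k n c i t
  rw [← succ_lt_chainLen_iff (by omega)]
  omega

lemma chainItem_le_of_lt_chainLen (hi : i ≤ n) (hs : s < chainLen k n c i t) :
    chainItem k n c i s ≤ n := by
  cases s with
  | zero => exact hi
  | succ s =>
    rw [chainItem_succ]
    exact (continues_chainItem hs).1

end ChainLen

section Feasible

variable {k n : ℕ} {c : ℕ → ℕ} {x : ℕ → ℕ → ℝ} {i t s : ℕ}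

lemma Feasible.support (hx : Feasible k n c x) (h : x i t ≠ 0) :
    1 ≤ i ∧ i ≤ n ∧ max i (k + 1) ≤ t ∧ t ≤ k + n := by
  by_contra h'
  exact h (hx.1 i t h')

lemma Feasible.le_nxt_of_continues (hx : Feasible k n c x) (hi : 1 ≤ i) (hin : i ≤ n)
    (h : Continues k n c i t) : x i t ≤ x (nxt k n c i) (t + 1) := by
  have := hx.2.2.2.1 i hi hin h.1 (t + 1) h.2
  rw [Nat.add_sub_cancel] at this
  linarith

lemma Feasible.le_along_chain (hx : Feasible k n c x) (hi : 1 ≤ i) (hin : i ≤ n)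
    (hs : s < chainLen k n c i t) : x i t ≤ x (chainItem k n c i s) (t + s) := by
  induction s with
  | zero => rfl
  | succ s ih =>
    have hsn : chainItem k n c i s ≤ n := chainItem_le_of_lt_chainLen hin (t := t) (by omega)
    have := add_le_chainItem (k := k) (c := c) (i := i) (s := s)
      fun u hu => chainItem_le_of_lt_chainLen hin (t := t) (by omega)
    rw [chainItem_succ, ← add_assoc]
    exact (ih (by omega)).trans (hx.le_nxt_of_continues (by omega) hsn (continues_chainItem hs))

/-- Positivity of `x` propagates along the longest chain by constraint (3), and this keeps the
whole chain inside the horizon. -/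
lemma Feasible.isMSM_chainLen (hx : Feasible k n c x) (hxt : x i t ≠ 0) :
    IsMSM k n c i (chainLen k n c i t) (t - 1) := by
  obtain ⟨hi, hin, hit, htn⟩ := hx.support hxt
  have hpos : 0 < x i t := lt_of_le_of_ne (hx.2.2.2.2 i t) (Ne.symm hxt)
  set L := chainLen k n c i t
  have hchain : ∀ s < L, chainItem k n c i s ≤ t + s ∧ t + s ≤ k + n := fun s hs => by
    have := hx.support (ne_of_gt (hpos.trans_le (hx.le_along_chain hi hin hs)))
    omega
  have hL1 : 1 ≤ L := one_le_chainLen k n c i t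
  have hlast := hchain (L - 1) (by omega)
  have hend : ¬Continues k n c (chainItem k n c i (L - 1)) (t + (L - 1)) :=
    not_continues_chainItem_chainLen
  have := nxt_le_or_eq k n c (chainItem k n c i (L - 1))
  refine ⟨hi, hL1, by omega, by omega, fun s hs => chainItem_le_of_lt_chainLen hin hs,
    fun s hs => by have := hchain s hs; omega, ?_⟩
  unfold Continues at hend
  omega

end Feasible

/-- `Assigns k n c p i t` says `M_{I,j}(i) = t` for the candidate `p = (i₁, m, j)`. -/
abbrev Assigns (k n : ℕ) (c : ℕ → ℕ) (p : ℕ × ℕ × ℕ) (i t : ℕ) : Prop :=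
  ∃ s, s < p.2.1 ∧ chainItem k n c p.1 s = i ∧ p.2.2 + s + 1 = t

noncomputable def msmsAssigning (k n : ℕ) (c : ℕ → ℕ) (i t : ℕ) : Finset (ℕ × ℕ × ℕ) :=
  (msmTriples k n).filter fun p => IsMSM k n c p.1 p.2.1 p.2.2 ∧ Assigns k n c p i t

section MSM

variable {k n : ℕ} {c : ℕ → ℕ} {p : ℕ × ℕ × ℕ} {i t : ℕ}

lemma mem_msmsAssigning :
    p ∈ msmsAssigning k n c i t ↔
      p ∈ msmTriples k n ∧ IsMSM k n c p.1 p.2.1 p.2.2 ∧ Assigns k n c p i t :=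
  mem_filter

lemma IsMSM.add_le_chainItem {m j : ℕ} (h : IsMSM k n c i m j) {s : ℕ} (hs : s < m) :
    i + s ≤ chainItem k n c i s :=
  _root_.add_le_chainItem fun u hu => h.2.2.2.2.1 u (by omega)

lemma IsMSM.mem_msmTriples {m j : ℕ} (h : IsMSM k n c i m j) : (i, m, j) ∈ msmTriples k n := by
  have := h.add_le_chainItem (s := m - 1) (by have := h.2.1; omega)
  obtain ⟨hi, hm, hj, hjm, hle, -⟩ := h
  have := hle (m - 1) (by omega)
  simp only [msmTriples, mem_product, mem_Icc]
  omega

lemma IsMSM.bounds_of_assigns (h : IsMSM k n c p.1 p.2.1 p.2.2) (ha : Assigns k n c p i t) :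
    1 ≤ i ∧ i ≤ n ∧ max i (k + 1) ≤ t ∧ t ≤ k + n := by
  obtain ⟨s, hs, rfl, rfl⟩ := ha
  have := h.add_le_chainItem hs
  obtain ⟨hi, -, hj, hjm, hle, hslot, -⟩ := h
  have := hle s hs
  have := hslot s hs
  omega

lemma IsMSM.slot_unique (h : IsMSM k n c p.1 p.2.1 p.2.2) {t' : ℕ} (ha : Assigns k n c p i t)
    (ha' : Assigns k n c p i t') : t = t' := by
  obtain ⟨s, hs, hsi, rfl⟩ := ha
  obtain ⟨s', hs', rfl, rfl⟩ := ha'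
  have := (chainItem_strictMonoOn h.2.2.2.2.1).injOn hs hs' hsi
  omega

/-- By condition (ii), `n(i) ≥ t + 2` cannot follow `i` in slot `t + 1`, so `i` is last. -/
lemma IsMSM.assigns_iff_last (h : IsMSM k n c p.1 p.2.1 p.2.2) (hit : t + 2 ≤ nxt k n c i) :
    Assigns k n c p i t ↔ chainItem k n c p.1 (p.2.1 - 1) = i ∧ p.2.2 + p.2.1 = t := by
  have hm := h.2.1
  constructor
  · rintro ⟨s, hs, rfl, rfl⟩
    obtain rfl : s = p.2.1 - 1 := by
      by_contra hne
      have hnext := h.2.2.2.2.2.1 (s + 1) (by omega)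
      rw [chainItem_succ] at hnext
      omega
    exact ⟨rfl, by omega⟩
  · rintro ⟨hi, ht⟩
    exact ⟨p.2.1 - 1, by omega, hi, by omega⟩

lemma IsMSM.exists_pred_of_assigns (h : IsMSM k n c p.1 p.2.1 p.2.2) (ha : Assigns k n c p i t)
    (hstart : p.2.2 + 1 ≠ t) :
    ∃ q, (1 ≤ q ∧ q ≤ n) ∧ nxt k n c q = i ∧ Assigns k n c p q (t - 1) := by
  obtain ⟨s, hs, rfl, rfl⟩ := ha
  obtain ⟨s, rfl⟩ : ∃ u, s = u + 1 := Nat.exists_eq_succ_of_ne_zero (by omega)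
  have := h.add_le_chainItem (s := s) (by omega)
  exact ⟨chainItem k n c p.1 s, ⟨by have := h.1; omega, h.2.2.2.2.1 s (by omega)⟩,
    (chainItem_succ _ _).symm, s, by omega, rfl, by omega⟩

lemma Assigns.nxt_of_continues (hp : p.2.1 = chainLen k n c p.1 (p.2.2 + 1))
    (ha : Assigns k n c p i t) (hc : Continues k n c i t) :
    Assigns k n c p (nxt k n c i) (t + 1) := by
  obtain ⟨s, hs, rfl, rfl⟩ := ha
  rw [add_right_comm] at hc
  have := (succ_lt_chainLen_iff (hp ▸ hs)).2 hc
  exact ⟨s + 1, by omega, chainItem_succ _ _, by omega⟩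

end MSM

theorem Finset.sum_sum_filter_of_existsUnique {α ι M : Type*} [AddCommMonoid M]
    {s : Finset α} {F : Finset ι} {P : ι → α → Prop} [∀ t, DecidablePred (P t)] (f : α → M)
    (h : ∀ a ∈ s, ∃! t, t ∈ F ∧ P t a) :
    ∑ t ∈ F, ∑ a ∈ s with P t a, f a = ∑ a ∈ s, f a := by
  simp only [sum_filter]
  rw [sum_comm]
  refine sum_congr rfl fun a ha => ?_
  obtain ⟨t, ⟨htF, hPt⟩, huniq⟩ := h a ha
  rw [sum_eq_single_of_mem t htF fun t' ht' hne => if_neg fun hP => hne (huniq t' ⟨ht', hP⟩),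
    if_pos hPt]

namespace IsMSMDecomp

variable {k n : ℕ} {c : ℕ → ℕ} {x : ℕ → ℕ → ℝ} {lam : ℕ × ℕ × ℕ → ℝ}

lemma sum_msmsAssigning (hlam : IsMSMDecomp k n c x lam) {i : ℕ} (hi : 1 ≤ i) (hin : i ≤ n)
    (t : ℕ) : ∑ p ∈ msmsAssigning k n c i t, lam p = x i t :=
  (hlam.2.2 i t hi hin).symm

theorem sum_containing_item (hx : Feasible k n c x) (hlam : IsMSMDecomp k n c x lam) {i : ℕ}
    (hi : 1 ≤ i) (hin : i ≤ n) :
    ∑ p ∈ (msmTriples k n).filter (fun p => IsMSM k n c p.1 p.2.1 p.2.2 ∧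
      ∃ s, s < p.2.1 ∧ chainItem k n c p.1 s = i), lam p = 1 := by
  rw [← sum_sum_filter_of_existsUnique (F := Icc (max i (k + 1)) (k + n))
    (P := fun t p => Assigns k n c p i t)]
  · rw [← hx.2.1 i hi hin]
    refine sum_congr rfl fun t _ => ?_
    rw [← hlam.sum_msmsAssigning hi hin, msmsAssigning, filter_filter]
    refine sum_congr (filter_congr fun p _ => ?_) fun _ _ => rfl
    exact ⟨fun ⟨⟨hp, _⟩, ha⟩ => ⟨hp, ha⟩,
      fun ⟨hp, s, hs, hsi, hst⟩ => ⟨⟨hp, s, hs, hsi⟩, s, hs, hsi, hst⟩⟩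
  · intro p hp
    obtain ⟨-, hp, s, hs, hsi⟩ := mem_filter.1 hp
    have ha : Assigns k n c p i (p.2.2 + s + 1) := ⟨s, hs, hsi, rfl⟩
    have := hp.bounds_of_assigns ha
    exact ⟨_, ⟨mem_Icc.2 (by omega), ha⟩, fun t ⟨_, ha'⟩ => hp.slot_unique ha' ha⟩

theorem sum_containing_slot (hx : Feasible k n c x) (hlam : IsMSMDecomp k n c x lam) {t : ℕ}
    (ht : k + 1 ≤ t) (htn : t ≤ k + n) :
    ∑ p ∈ (msmTriples k n).filter (fun p => IsMSM k n c p.1 p.2.1 p.2.2 ∧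
      p.2.2 < t ∧ t ≤ p.2.2 + p.2.1), lam p = 1 := by
  rw [← sum_sum_filter_of_existsUnique (F := Icc 1 (min t n))
    (P := fun i p => Assigns k n c p i t)]
  · rw [← hx.2.2.1 t ht htn]
    refine sum_congr rfl fun i hi => ?_
    have hi := mem_Icc.1 hi
    rw [← hlam.sum_msmsAssigning hi.1 (by omega), msmsAssigning, filter_filter]
    refine sum_congr (filter_congr fun p _ => ?_) fun _ _ => rfl
    exact ⟨fun ⟨⟨hp, _⟩, ha⟩ => ⟨hp, ha⟩,
      fun ⟨hp, s, hs, hsi, hst⟩ => ⟨⟨hp, by omega, by omega⟩, s, hs, hsi, hst⟩⟩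
  · intro p hp
    obtain ⟨-, hp, hjt, htjm⟩ := mem_filter.1 hp
    have ha : Assigns k n c p (chainItem k n c p.1 (t - p.2.2 - 1)) t :=
      ⟨t - p.2.2 - 1, by omega, rfl, by omega⟩
    have := hp.bounds_of_assigns ha
    refine ⟨_, ⟨mem_Icc.2 (by omega), ha⟩, fun i ⟨_, s, hs, hsi, hst⟩ => ?_⟩
    rw [← hsi, show s = t - p.2.2 - 1 by omega]

theorem sum_eq_cost (hlam : IsMSMDecomp k n c x lam) :
    ∑ p ∈ (msmTriples k n).filter (fun p => IsMSM k n c p.1 p.2.1 p.2.2), lam p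
      = cost k n c x := by
  set last : ℕ × ℕ × ℕ → (_ : ℕ) × ℕ :=
    fun p => ⟨chainItem k n c p.1 (p.2.1 - 1), p.2.2 + p.2.1⟩
  have hlast : ∀ p ∈ (msmTriples k n).filter (fun p => IsMSM k n c p.1 p.2.1 p.2.2),
      last p ∈ (Icc 1 n).sigma fun i => Icc (max i (k + 1)) (nxt k n c i - 2) := by
    intro p hp
    obtain ⟨-, hp⟩ := mem_filter.1 hp
    have := hp.bounds_of_assigns ⟨p.2.1 - 1, by have := hp.2.1; omega, rfl, rfl⟩
    have := hp.2.1
    have := hp.2.2.2.2.2.2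
    simp only [last, mem_sigma, mem_Icc]
    omega
  rw [← sum_fiberwise_of_maps_to hlast, cost, sum_sigma]
  refine sum_congr rfl fun i hi => sum_congr rfl fun t ht => ?_
  obtain ⟨hi, hin⟩ := mem_Icc.1 hi
  rw [← hlam.sum_msmsAssigning hi hin, msmsAssigning, filter_filter]
  refine sum_congr (filter_congr fun p _ => ?_) fun _ _ => rfl
  simp only [last, Sigma.mk.injEq, heq_eq_eq]
  exact and_congr_right fun hp => (hp.assigns_iff_last (by have := mem_Icc.1 ht; omega)).symm

end IsMSMDecomp

noncomputable def inflow (k n : ℕ) (c : ℕ → ℕ) (x : ℕ → ℕ → ℝ) (i t : ℕ) : ℝ :=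
  if h : ∃ q, (1 ≤ q ∧ q ≤ n) ∧ nxt k n c q = i then x h.choose (t - 1) else 0

/-- The part `x_{i,t} - x_{q,t-1}` of `x_{i,t}` not inherited from the predecessor `q` of `i`
is put on the longest chain started by `i` in slot `t`. -/
noncomputable def msmDecomp (k n : ℕ) (c : ℕ → ℕ) (x : ℕ → ℕ → ℝ) (p : ℕ × ℕ × ℕ) : ℝ :=
  if IsMSM k n c p.1 p.2.1 p.2.2 ∧ p.2.1 = chainLen k n c p.1 (p.2.2 + 1) then
    x p.1 (p.2.2 + 1) - inflow k n c x p.1 (p.2.2 + 1)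
  else 0

section Decomp

variable {k n : ℕ} {c : ℕ → ℕ} {x : ℕ → ℕ → ℝ} {i t : ℕ}

lemma inflow_nonneg (hx : Feasible k n c x) : 0 ≤ inflow k n c x i t := by
  unfold inflow
  split_ifs
  exacts [hx.2.2.2.2 _ _, le_rfl]

lemma inflow_le (hx : Feasible k n c x) (hin : i ≤ n) (hit : i ≤ t) :
    inflow k n c x i t ≤ x i t := by
  unfold inflow
  split_ifs with h
  · obtain ⟨⟨hq, hqn⟩, hqi⟩ := h.choose_spec
    have := hx.2.2.2.1 _ hq hqn (by rwa [hqi]) t (by rwa [hqi])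
    rw [hqi] at this
    linarith
  · exact hx.2.2.2.2 i t

lemma msmDecomp_nonneg (hx : Feasible k n c x) (p : ℕ × ℕ × ℕ) : 0 ≤ msmDecomp k n c x p := by
  unfold msmDecomp
  split_ifs with h
  · have hm := h.1.2.1
    have hin := h.1.2.2.2.2.1 0 (by omega)
    have hit := h.1.2.2.2.2.2.1 0 (by omega)
    rw [chainItem_zero] at hin hit
    linarith [inflow_le hx hin (t := p.2.2 + 1) (by omega)]
  · exact le_rfl

lemma msmDecomp_eq_zero_of_not_isMSM {p : ℕ × ℕ × ℕ} (h : ¬IsMSM k n c p.1 p.2.1 p.2.2) :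
    msmDecomp k n c x p = 0 :=
  if_neg fun h' => h h'.1

lemma msmDecomp_chainLen (hx : Feasible k n c x) (hi : 1 ≤ i) (hin : i ≤ n) (hit : i ≤ t) :
    msmDecomp k n c x (i, chainLen k n c i t, t - 1) = x i t - inflow k n c x i t := by
  have ht : t - 1 + 1 = t := by omega
  by_cases hxt : x i t = 0
  · have := inflow_nonneg hx (i := i) (t := t)
    have := inflow_le hx hin hit
    have hinflow : inflow k n c x i t = 0 := by linarith
    unfold msmDecomp
    split_ifs <;> simp only [ht, hxt, hinflow, sub_zero]
  · rw [msmDecomp, if_pos ⟨hx.isMSM_chainLen hxt, by rw [ht]⟩]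
    simp only [ht]

lemma sum_msmsAssigning_start (hx : Feasible k n c x) (hi : 1 ≤ i) (hin : i ≤ n) (hit : i ≤ t) :
    ∑ p ∈ (msmsAssigning k n c i t).filter (fun p => p.2.2 + 1 = t), msmDecomp k n c x p
      = x i t - inflow k n c x i t := by
  rw [← msmDecomp_chainLen hx hi hin hit]
  refine sum_eq_single _ (fun p hp hne => ?_) (fun hnot => ?_)
  · obtain ⟨hp, hj⟩ := mem_filter.1 hp
    obtain ⟨-, -, s, -, hsi, hst⟩ := mem_msmsAssigning.1 hp
    obtain rfl : s = 0 := by omega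
    refine if_neg fun ⟨_, hlen⟩ => hne (Prod.ext hsi (Prod.ext ?_ (Nat.eq_sub_of_add_eq hj)))
    rw [hj] at hlen
    rw [hlen, ← hsi]
    rfl
  · refine msmDecomp_eq_zero_of_not_isMSM fun hmsm => hnot (mem_filter.2 ⟨?_, by dsimp; omega⟩)
    exact mem_msmsAssigning.2
      ⟨hmsm.mem_msmTriples, hmsm, 0, one_le_chainLen k n c i t, rfl, by dsimp; omega⟩

lemma sum_msmsAssigning_inherited {q : ℕ} (hq : 1 ≤ q ∧ q ≤ n) (hqi : nxt k n c q = i)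
    (hin : i ≤ n) (hit : i ≤ t) :
    ∑ p ∈ (msmsAssigning k n c i t).filter (fun p => ¬p.2.2 + 1 = t), msmDecomp k n c x p
      = ∑ p ∈ msmsAssigning k n c q (t - 1), msmDecomp k n c x p := by
  have hqn : nxt k n c q ≤ n := hqi ▸ hin
  have := lt_nxt_of_nxt_le hqn
  refine sum_subset (fun p hp => ?_) (fun p hp hnot => ?_)
  · obtain ⟨hp, hstart⟩ := mem_filter.1 hp
    obtain ⟨hmem, hmsm, ha⟩ := mem_msmsAssigning.1 hp
    obtain ⟨q', hq', hq'i, ha'⟩ := hmsm.exists_pred_of_assigns ha hstart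
    rw [nxt_inj hq'.2 hq.2 (hq'i ▸ hin) (hq'i.trans hqi.symm)] at ha'
    exact mem_msmsAssigning.2 ⟨hmem, hmsm, ha'⟩
  · obtain ⟨hmem, hmsm, ha⟩ := mem_msmsAssigning.1 hp
    refine if_neg fun ⟨_, hcanon⟩ => hnot (mem_filter.2 ⟨mem_msmsAssigning.2 ⟨hmem, hmsm, ?_⟩, ?_⟩)
    · have := ha.nxt_of_continues hcanon ⟨hqn, by omega⟩
      rwa [hqi, Nat.sub_add_cancel (by omega)] at this
    · obtain ⟨s, -, -, hst⟩ := ha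
      omega

lemma sum_msmsAssigning_inherited_eq_zero (h : ¬∃ q, (1 ≤ q ∧ q ≤ n) ∧ nxt k n c q = i) :
    ∑ p ∈ (msmsAssigning k n c i t).filter (fun p => ¬p.2.2 + 1 = t), msmDecomp k n c x p = 0 :=
  sum_eq_zero fun p hp => by
    obtain ⟨hp, hstart⟩ := mem_filter.1 hp
    obtain ⟨-, hmsm, ha⟩ := mem_msmsAssigning.1 hp
    obtain ⟨q, hq, hqi, -⟩ := hmsm.exists_pred_of_assigns ha hstart
    exact absurd ⟨q, hq, hqi⟩ h

lemma sum_msmsAssigning_msmDecomp (hx : Feasible k n c x) (hi : 1 ≤ i) (hin : i ≤ n) (t : ℕ) :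
    ∑ p ∈ msmsAssigning k n c i t, msmDecomp k n c x p = x i t := by
  induction i using Nat.strong_induction_on generalizing t with
  | _ i ih =>
  by_cases ht : max i (k + 1) ≤ t ∧ t ≤ k + n
  · rw [← sum_filter_add_sum_filter_not _ (fun p => p.2.2 + 1 = t),
      sum_msmsAssigning_start hx hi hin (by omega), inflow]
    split_ifs with h
    · obtain ⟨hq, hqi⟩ := h.choose_spec
      have hqn : nxt k n c h.choose ≤ n := by rw [hqi]; exact hin
      rw [sum_msmsAssigning_inherited hq hqi hin (by omega),
        ih _ (lt_of_lt_of_eq (lt_nxt_of_nxt_le hqn) hqi) hq.1 hq.2]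
      ring
    · rw [sum_msmsAssigning_inherited_eq_zero h]
      ring
  · rw [hx.1 i t (by omega)]
    refine sum_eq_zero fun p hp => absurd ?_ ht
    obtain ⟨-, hmsm, ha⟩ := mem_msmsAssigning.1 hp
    have := hmsm.bounds_of_assigns ha
    omega

theorem Feasible.isMSMDecomp_msmDecomp (hx : Feasible k n c x) :
    IsMSMDecomp k n c x (msmDecomp k n c x) :=
  ⟨msmDecomp_nonneg hx, fun _ hp => msmDecomp_eq_zero_of_not_isMSM fun h => hp ⟨h.mem_msmTriples, h⟩,
    fun _ t hi hin => (sum_msmsAssigning_msmDecomp hx hi hin t).symm⟩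

end Decomp

open scoped Classical in
theorem stmt6_general (k n : ℕ) (c : ℕ → ℕ) (x : ℕ → ℕ → ℝ)
    (hx : Feasible k n c x) :
    ∃ lam : ℕ × ℕ × ℕ → ℝ,
      (∀ p, 0 ≤ lam p) ∧
      (∀ p, ¬(p ∈ msmTriples k n ∧ IsMSM k n c p.1 p.2.1 p.2.2) → lam p = 0) ∧
      (∀ i, 1 ≤ i → i ≤ n →
        ∑ p ∈ (msmTriples k n).filter
            (fun p => IsMSM k n c p.1 p.2.1 p.2.2 ∧
              ∃ s, s < p.2.1 ∧ chainItem k n c p.1 s = i), lam p = 1) ∧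
      (∀ t, k + 1 ≤ t → t ≤ k + n →
        ∑ p ∈ (msmTriples k n).filter
            (fun p => IsMSM k n c p.1 p.2.1 p.2.2 ∧
              p.2.2 < t ∧ t ≤ p.2.2 + p.2.1), lam p = 1) ∧
      ∑ p ∈ (msmTriples k n).filter
          (fun p => IsMSM k n c p.1 p.2.1 p.2.2), lam p = cost k n c x := by
  have hlam := hx.isMSMDecomp_msmDecomp
  exact ⟨msmDecomp k n c x, hlam.1, hlam.2.1, fun i hi hin => hlam.sum_containing_item hx hi hin,
    fun t ht htn => hlam.sum_containing_slot hx ht htn, hlam.sum_eq_cost⟩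

open scoped Classical in
/-- Proposition 4 (packing of monochromatic sequence matchings): for every feasible
fractional solution `x` there is a fractional packing `λ` of MSMs such that
(a) every item is fully covered, (b) every time slot in `[k+1, k+n]` is fully covered,
and (c) the total weight of the packing equals `z(x)`. -/
theorem stmt6 (k n : ℕ) (hk : 1 ≤ k) (hn : 1 ≤ n) (c : ℕ → ℕ) (x : ℕ → ℕ → ℝ)
    (hx : Feasible k n c x) :
    ∃ lam : ℕ × ℕ × ℕ → ℝ,
      (∀ p, 0 ≤ lam p) ∧
      (∀ p, ¬(p ∈ msmTriples k n ∧ IsMSM k n c p.1 p.2.1 p.2.2) → lam p = 0) ∧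
      (∀ i, 1 ≤ i → i ≤ n →
        ∑ p ∈ (msmTriples k n).filter
            (fun p => IsMSM k n c p.1 p.2.1 p.2.2 ∧
              ∃ s, s < p.2.1 ∧ chainItem k n c p.1 s = i), lam p = 1) ∧
      (∀ t, k + 1 ≤ t → t ≤ k + n →
        ∑ p ∈ (msmTriples k n).filter
            (fun p => IsMSM k n c p.1 p.2.1 p.2.2 ∧
              p.2.2 < t ∧ t ≤ p.2.2 + p.2.1), lam p = 1) ∧
      ∑ p ∈ (msmTriples k n).filter
          (fun p => IsMSM k n c p.1 p.2.1 p.2.2), lam p = cost k n c x :=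
  stmt6_general k n c x hx
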